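/- Let τ ≥ 1 be a real number and let K be a set of integers with 2 ≤ K_min and K_max ≤ √2·(K_min−1). Suppose there exists a (v,K)-packing with n blocks whose block sizes sum to N, with 2n−1 ≤ N, in which every point has replication number r_x ≥ (v−1)/(τ(K_min−1)). Then there exists an n×N complex matrix with (ℓ₁,t)-recoverability for every positive integer t ≤ √n/(4τ). -/

import Mathlib

open scoped BigOperators

noncomputable def welch (n N : ℕ) : ℝ :=
  Real.sqrt (((N : ℝ) - n) / (((N : ℝ) - 1) * n))

/-- Normalised absolute inner product of columns `i` and `j` of `Φ`. -/
noncomputable def colCoh {m ι : Type*} [Fintype m] (Φ : Matrix m ι ℂ) (i j : ι) : ℝ :=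
  ‖∑ r, (starRingEnd ℂ) (Φ r i) * Φ r j‖ /
    (Real.sqrt (∑ r, ‖Φ r i‖ ^ 2) * Real.sqrt (∑ r, ‖Φ r j‖ ^ 2))

/-- `(ℓ₁,t)`-recoverability: every `t`-sparse `x` is the unique `ℓ₁`-minimizer among
solutions `z` of `Φ z = Φ x`. -/
def Recoverable {m ι : Type*} [Fintype m] [Fintype ι] [DecidableEq ι]
    (Φ : Matrix m ι ℂ) (t : ℕ) : Prop :=
  ∀ x : ι → ℂ, (Finset.univ.filter (fun i => x i ≠ 0)).card ≤ t →
    ∀ z : ι → ℂ, Φ.mulVec z = Φ.mulVec x → z ≠ x →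
      ∑ i, ‖x i‖ < ∑ i, ‖z i‖
/-- `B` is the block set of a `(v,K)`-packing: every block has cardinality in `K`
and every pair of distinct points lies in at most one block. -/
def IsPacking {V : Type*} [DecidableEq V] (B : Finset (Finset V)) (K : Finset ℕ) : Prop :=
  (∀ b ∈ B, b.card ∈ K) ∧
  ∀ x y : V, x ≠ y → (B.filter (fun b => x ∈ b ∧ y ∈ b)).card ≤ 1

/-- The replication number of the point `x`: the number of blocks containing `x`. -/
def repl {V : Type*} [DecidableEq V] (B : Finset (Finset V)) (x : V) : ℕ :=
  (B.filter (fun b => x ∈ b)).card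

/-! Index the rows by the blocks and the columns by the incidences `(b, x)`, `x ∈ b`. The
columns at a point `x` carry, on the `r_x` rows of the blocks through `x`, a unitary matrix whose
entries all have modulus `r_x^{-1/2}` (a normalised discrete Fourier matrix). Columns at the same
point are then orthonormal, while columns at distinct points share at most one nonzero row, so the
coherence is at most `(r_x r_y)^{-1/2} ≤ μ := τ (K_min - 1) / (v - 1)`. Counting the ordered pairs
of points covered by the blocks gives `n K_min (K_min - 1) ≤ v (v - 1)`, hence `√n ≤ 2τ / μ` and
`(2t - 1) μ < 1` for `t ≤ √n / (4τ)`. By the classical coherence argument this forces the null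
space property of order `t`, which is exactly what makes every `t`-sparse vector the unique
`ℓ₁`-minimiser. -/

open Finset Matrix

section Recovery

variable {m ι : Type*} [Fintype m] [Fintype ι] [DecidableEq ι]

def NullSpaceProperty (Φ : Matrix m ι ℂ) (t : ℕ) : Prop :=
  ∀ h : ι → ℂ, Φ *ᵥ h = 0 → h ≠ 0 → ∀ S : Finset ι, #S ≤ t →
    ∑ i ∈ S, ‖h i‖ < ∑ i ∈ Sᶜ, ‖h i‖

theorem recoverable_of_nullSpaceProperty {Φ : Matrix m ι ℂ} {t : ℕ}
    (hΦ : NullSpaceProperty Φ t) : Recoverable Φ t := by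
  intro x hx z hz hzx
  set S := univ.filter fun i => x i ≠ 0
  have hker : Φ *ᵥ (z - x) = 0 := by rw [mulVec_sub, hz, sub_self]
  have hnsp := hΦ (z - x) hker (sub_ne_zero.2 hzx) S hx
  have hxS : ∑ i, ‖x i‖ = ∑ i ∈ S, ‖x i‖ :=
    (sum_subset (subset_univ S) fun i _ hi => by simpa [S] using hi).symm
  have hzS : ∑ i ∈ S, (‖x i‖ - ‖(z - x) i‖) ≤ ∑ i ∈ S, ‖z i‖ :=
    sum_le_sum fun i _ => by
      have := norm_sub_le (z i) (z i - x i)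
      rw [sub_sub_cancel] at this
      simp only [Pi.sub_apply]
      linarith
  have hzSc : ∑ i ∈ Sᶜ, ‖(z - x) i‖ = ∑ i ∈ Sᶜ, ‖z i‖ :=
    sum_congr rfl fun i hi => by simp_all [S]
  rw [hxS, ← sum_add_sum_compl S fun i => ‖z i‖, ← hzSc]
  rw [sum_sub_distrib] at hzS
  linarith

structure IsUnitNormCoherent (Φ : Matrix m ι ℂ) (μ : ℝ) : Prop where
  gram_diag : ∀ i, (Φᴴ * Φ) i i = 1
  norm_gram_le : Pairwise fun i j => ‖(Φᴴ * Φ) i j‖ ≤ μ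

namespace IsUnitNormCoherent

variable {Φ : Matrix m ι ℂ} {μ : ℝ}

omit [Fintype ι] [DecidableEq ι] in
theorem submatrix {m' ι' : Type*} [Fintype m'] [Fintype ι']
    (hΦ : IsUnitNormCoherent Φ μ) (e : m' ≃ m) (f : ι' ≃ ι) :
    IsUnitNormCoherent (Φ.submatrix e f) μ := by
  have hgram : (Φ.submatrix e f)ᴴ * Φ.submatrix e f = (Φᴴ * Φ).submatrix f f := by
    rw [conjTranspose_submatrix, submatrix_mul_equiv]
  refine ⟨fun i => ?_, fun i j hij => ?_⟩
  · rw [hgram]; exact hΦ.gram_diag (f i)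
  · rw [hgram]; exact hΦ.norm_gram_le (f.injective.ne hij)

theorem norm_mul_one_add_le (hΦ : IsUnitNormCoherent Φ μ) {h : ι → ℂ} (hh : Φ *ᵥ h = 0)
    (i : ι) : ‖h i‖ * (1 + μ) ≤ μ * ∑ j, ‖h j‖ := by
  have hG : ∑ j, (Φᴴ * Φ) i j * h j = 0 := by
    have := congrFun (show (Φᴴ * Φ) *ᵥ h = 0 by rw [← mulVec_mulVec, hh, mulVec_zero]) i
    simpa [mulVec, dotProduct] using this
  rw [← add_sum_erase _ _ (mem_univ i), hΦ.gram_diag, one_mul, add_eq_zero_iff_eq_neg] at hG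
  have hbound : ‖h i‖ ≤ μ * ∑ j ∈ univ.erase i, ‖h j‖ :=
    calc ‖h i‖ ≤ ∑ j ∈ univ.erase i, ‖(Φᴴ * Φ) i j * h j‖ := by
          rw [hG, norm_neg]
          exact norm_sum_le _ _
      _ ≤ ∑ j ∈ univ.erase i, μ * ‖h j‖ := sum_le_sum fun j hj => by
          rw [norm_mul]
          exact mul_le_mul_of_nonneg_right (hΦ.norm_gram_le (ne_of_mem_erase hj).symm)
            (norm_nonneg _)
      _ = μ * ∑ j ∈ univ.erase i, ‖h j‖ := (mul_sum _ _ _).symm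
  rw [sum_erase_eq_sub (mem_univ i)] at hbound
  linarith

theorem nullSpaceProperty (hΦ : IsUnitNormCoherent Φ μ) (hμ : 0 ≤ μ) {t : ℕ}
    (ht : (2 * t - 1) * μ < 1) : NullSpaceProperty Φ t := by
  intro h hh hne S hS
  have hT : 0 < ∑ i, ‖h i‖ := by
    obtain ⟨i, hi⟩ := Function.ne_iff.1 hne
    exact (norm_pos_iff.2 hi).trans_le
      (single_le_sum (fun j _ => norm_nonneg (h j)) (mem_univ i))
  have hsumS : (∑ i ∈ S, ‖h i‖) * (1 + μ) ≤ t * (μ * ∑ i, ‖h i‖) :=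
    calc (∑ i ∈ S, ‖h i‖) * (1 + μ) ≤ ∑ _i ∈ S, μ * ∑ j, ‖h j‖ := by
          rw [sum_mul]; exact sum_le_sum fun i _ => hΦ.norm_mul_one_add_le hh i
      _ ≤ t * (μ * ∑ i, ‖h i‖) := by
          rw [sum_const, nsmul_eq_mul]
          exact mul_le_mul_of_nonneg_right (by exact_mod_cast hS) (by positivity)
  rw [← sum_add_sum_compl S fun i => ‖h i‖] at hT hsumS
  nlinarith

end IsUnitNormCoherent

theorem recoverable_of_isUnitNormCoherent {Φ : Matrix m ι ℂ} {μ : ℝ}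
    (hΦ : IsUnitNormCoherent Φ μ) (hμ : 0 ≤ μ) {t : ℕ} (ht : (2 * t - 1) * μ < 1) :
    Recoverable Φ t :=
  recoverable_of_nullSpaceProperty (hΦ.nullSpaceProperty hμ ht)

end Recovery

theorem exists_flat_unitary (ι : Type*) [Fintype ι] [DecidableEq ι] :
    ∃ U : Matrix ι ι ℂ, Uᴴ * U = 1 ∧ ∀ i j, ‖U i j‖ = (√(Fintype.card ι))⁻¹ := by
  set r := Fintype.card ι
  rcases isEmpty_or_nonempty ι with hι | hι
  · exact ⟨0, Subsingleton.elim _ _, fun i => isEmptyElim i⟩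
  have : NeZero r := ⟨Fintype.card_ne_zero⟩
  set ψ : AddChar (ZMod r) ℂ := ZMod.stdAddChar
  have hr : (0 : ℝ) < √r := Real.sqrt_pos.2 (by exact_mod_cast Fintype.card_pos)
  let F : Matrix (ZMod r) (ZMod r) ℂ := fun k a => ψ (k * a) / (√r : ℂ)
  have hF : Fᴴ * F = 1 := by
    ext a b
    have hterm : ∀ k, star (F k a) * F k b = ψ (k * (b - a)) / r := fun k => by
      simp only [F, star_div₀, Complex.star_def, Complex.conj_ofReal,
        ← AddChar.map_neg_eq_conj]
      rw [div_mul_div_comm, ← AddChar.map_add_eq_mul, ← Complex.ofReal_mul,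
        Real.mul_self_sqrt (Nat.cast_nonneg r), neg_add_eq_sub, ← mul_sub]
      norm_cast
    rw [mul_apply]
    simp_rw [conjTranspose_apply, hterm]
    rw [← sum_div, AddChar.sum_mulShift _ (ZMod.isPrimitive_stdAddChar r), ZMod.card, one_apply]
    by_cases hab : a = b
    · simp [hab]
    · simp [hab, sub_eq_zero, Ne.symm hab]
  let e : ι ≃ ZMod r := Fintype.equivOfCardEq (ZMod.card r).symm
  refine ⟨F.submatrix e e, ?_, fun i j => ?_⟩
  · rw [conjTranspose_submatrix, submatrix_mul_equiv, hF, submatrix_one_equiv]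
  · rw [submatrix_apply, norm_div, AddChar.norm_apply, Complex.norm_real,
      Real.norm_of_nonneg hr.le, one_div]

theorem Fintype.sum_dite_eq_sum_subtype {α M : Type*} [Fintype α] [AddCommMonoid M]
    (p : α → Prop) [DecidablePred p] (f : {a // p a} → M) :
    ∑ a, (if h : p a then f ⟨a, h⟩ else 0) = ∑ a, f a := by
  rw [← Fintype.sum_subtype_add_sum_subtype p,
    Fintype.sum_eq_zero _ fun a : {a // ¬ p a} => dif_neg a.2, add_zero]
  exact Fintype.sum_congr _ _ fun a => dif_pos a.2

section Incidence

variable {V : Type*} [DecidableEq V] (B : Finset (Finset V)) {K : Finset ℕ}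

def incidenceBlock (c : B.sigma id) : {b : B // c.1.2 ∈ b.1} :=
  ⟨⟨c.1.1, (mem_sigma.1 c.2).1⟩, (mem_sigma.1 c.2).2⟩

def incidenceMatrix (U : ∀ x : V, Matrix {b : B // x ∈ b.1} {b : B // x ∈ b.1} ℂ) :
    Matrix B (B.sigma id) ℂ :=
  fun b c => if h : c.1.2 ∈ b.1 then U c.1.2 ⟨b, h⟩ (incidenceBlock B c) else 0

variable {B} {U : ∀ x : V, Matrix {b : B // x ∈ b.1} {b : B // x ∈ b.1} ℂ}

theorem card_subtype_mem_eq_repl (x : V) : Fintype.card {b : B // x ∈ b.1} = repl B x := by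
  rw [Fintype.card_subtype, repl, card_filter, card_filter, ← sum_coe_sort B]

theorem gram_incidenceMatrix_of_point_eq (hU : ∀ x, (U x)ᴴ * U x = 1) {c d : B.sigma id}
    (hcd : c.1.2 = d.1.2) :
    ((incidenceMatrix B U)ᴴ * incidenceMatrix B U) c d = if c = d then 1 else 0 := by
  obtain ⟨⟨b, x⟩, hc⟩ := c
  obtain ⟨⟨b', y⟩, hd⟩ := d
  obtain rfl : x = y := hcd
  rw [mul_apply]
  simp only [conjTranspose_apply, incidenceMatrix, apply_dite star, star_zero, dite_mul, zero_mul,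
    mul_dite, mul_zero]
  have hunit := congrFun₂ (hU x) (incidenceBlock B ⟨⟨b, x⟩, hc⟩) (incidenceBlock B ⟨⟨b', x⟩, hd⟩)
  rw [mul_apply, one_apply] at hunit
  simp only [conjTranspose_apply] at hunit
  rw [sum_congr rfl fun e _ => dite_congr rfl (fun h => dif_pos h) fun _ => rfl,
    Fintype.sum_dite_eq_sum_subtype (fun e : B => x ∈ e.1) fun e => star (U x e _) * U x e _, hunit]
  simp [incidenceBlock, Sigma.ext_iff]

theorem incidenceMatrix_eq_zero {b : B} {c : B.sigma id} (h : c.1.2 ∉ b.1) :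
    incidenceMatrix B U b c = 0 :=
  dif_neg h

theorem norm_incidenceMatrix_le (hflat : ∀ x i j, ‖U x i j‖ = (√(repl B x))⁻¹) {r : ℝ}
    (hr : 0 < r) (hrepl : ∀ x, r ≤ repl B x) (b : B) (c : B.sigma id) :
    ‖incidenceMatrix B U b c‖ ≤ (√r)⁻¹ := by
  by_cases h : c.1.2 ∈ b.1
  · rw [incidenceMatrix, dif_pos h, hflat]
    exact inv_anti₀ (Real.sqrt_pos.2 hr) (Real.sqrt_le_sqrt (hrepl _))
  · rw [incidenceMatrix_eq_zero h, norm_zero]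
    positivity

theorem norm_gram_incidenceMatrix_le (hB : IsPacking B K) {s : ℝ}
    (hentry : ∀ b c, ‖incidenceMatrix B U b c‖ ≤ s) {c d : B.sigma id} (hcd : c.1.2 ≠ d.1.2) :
    ‖((incidenceMatrix B U)ᴴ * incidenceMatrix B U) c d‖ ≤ s ^ 2 := by
  have hvanish : ∀ e : B, ¬ (c.1.2 ∈ e.1 ∧ d.1.2 ∈ e.1) →
      star (incidenceMatrix B U e c) * incidenceMatrix B U e d = 0 := by
    intro e he
    rcases not_and_or.1 he with h | h
    · rw [incidenceMatrix_eq_zero h, star_zero, zero_mul]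
    · rw [incidenceMatrix_eq_zero h, mul_zero]
  rw [mul_apply]
  simp only [conjTranspose_apply]
  by_cases h : ∃ e : B, c.1.2 ∈ e.1 ∧ d.1.2 ∈ e.1
  · obtain ⟨e, he⟩ := h
    rw [sum_eq_single e (fun e' _ he' => hvanish e' fun h' => he' (Subtype.ext
      (card_le_one.1 (hB.2 _ _ hcd) _ (mem_filter.2 ⟨e'.2, h'⟩) _ (mem_filter.2 ⟨e.2, he⟩))))
      (fun h => absurd (mem_univ e) h), norm_mul, norm_star, sq]
    exact mul_le_mul (hentry e c) (hentry e d) (norm_nonneg _) ((norm_nonneg _).trans (hentry e c))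
  · rw [sum_eq_zero fun e _ => hvanish e (not_exists.1 h e), norm_zero]
    exact sq_nonneg s

end Incidence

section Packing

variable {V : Type*} [DecidableEq V] {B : Finset (Finset V)} {K : Finset ℕ}

theorem exists_isUnitNormCoherent_of_isPacking (hB : IsPacking B K) {r : ℝ} (hr : 0 < r)
    (hrepl : ∀ x, r ≤ repl B x) : ∃ Φ : Matrix B (B.sigma id) ℂ, IsUnitNormCoherent Φ r⁻¹ := by
  choose U hU hflat using fun x => exists_flat_unitary {b : B // x ∈ b.1}
  simp only [card_subtype_mem_eq_repl] at hflat
  refine ⟨incidenceMatrix B U, ⟨fun c => ?_, fun c d hcd => ?_⟩⟩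
  · rw [gram_incidenceMatrix_of_point_eq hU rfl, if_pos rfl]
  beta_reduce
  by_cases hpt : c.1.2 = d.1.2
  · rw [gram_incidenceMatrix_of_point_eq hU hpt, if_neg hcd, norm_zero]
    positivity
  · have := norm_gram_incidenceMatrix_le hB (norm_incidenceMatrix_le hflat hr hrepl) hpt
    rwa [inv_pow, Real.sq_sqrt hr.le] at this

theorem card_mul_le_of_isPacking [Fintype V] (hB : IsPacking B K) {k : ℕ}
    (hk : ∀ b ∈ B, k ≤ #b) : #B * (k * (k - 1)) ≤ Fintype.card V * (Fintype.card V - 1) := by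
  have hdisj : (B : Set (Finset V)).PairwiseDisjoint offDiag := by
    intro b hb c hc hbc
    refine disjoint_left.2 fun p hpb hpc => hbc ?_
    rw [mem_offDiag] at hpb hpc
    exact card_le_one.1 (hB.2 _ _ hpb.2.2) _ (mem_filter.2 ⟨hb, hpb.1, hpb.2.1⟩)
      _ (mem_filter.2 ⟨hc, hpc.1, hpc.2.1⟩)
  calc #B * (k * (k - 1)) ≤ ∑ b ∈ B, #b * (#b - 1) := by
        rw [← smul_eq_mul]
        exact card_nsmul_le_sum _ _ _ fun b hb =>
          Nat.mul_le_mul (hk b hb) (Nat.sub_le_sub_right (hk b hb) 1)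
    _ = #(B.biUnion offDiag) := by
        rw [card_biUnion hdisj]
        simp only [offDiag_card, Nat.mul_sub_one]
    _ ≤ #(univ : Finset V).offDiag := card_le_card fun p hp => by
        obtain ⟨b, -, hp⟩ := mem_biUnion.1 hp
        exact mem_offDiag.2 ⟨mem_univ _, mem_univ _, (mem_offDiag.1 hp).2.2⟩
    _ = Fintype.card V * (Fintype.card V - 1) := by rw [offDiag_card, card_univ, Nat.mul_sub_one]

end Packing

theorem sqrt_mul_sub_one_le {n k v : ℕ} (hv : 1 ≤ v) (h : n * (k * (k - 1)) ≤ v * (v - 1)) :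
    √n * ((k : ℝ) - 1) ≤ 2 * ((v : ℝ) - 1) := by
  have hv' : (1 : ℝ) ≤ v := by exact_mod_cast hv
  rcases Nat.eq_zero_or_pos k with rfl | hk
  · push_cast
    nlinarith [Real.sqrt_nonneg n]
  have hk' : (1 : ℝ) ≤ k := by exact_mod_cast hk
  rw [← Nat.cast_le (α := ℝ)] at h
  push_cast [Nat.cast_sub hk, Nat.cast_sub hv] at h
  have hvv : (v : ℝ) * (v - 1) ≤ (2 * (v - 1)) ^ 2 := by
    rcases hv.eq_or_lt with rfl | hv2
    · norm_num
    · have : (2 : ℝ) ≤ v := by exact_mod_cast hv2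
      nlinarith
  calc √n * ((k : ℝ) - 1) = √(n * (k - 1) ^ 2) := by
        rw [Real.sqrt_mul (Nat.cast_nonneg _), Real.sqrt_sq (by linarith)]
    _ ≤ √((2 * (v - 1)) ^ 2) := Real.sqrt_le_sqrt (by nlinarith [Nat.cast_nonneg (α := ℝ) n])
    _ = 2 * ((v : ℝ) - 1) := Real.sqrt_sq (by linarith)

theorem stmt_16_general (τ : ℝ) (hτ : 1 ≤ τ)
    (K : Finset ℕ) (hKne : K.Nonempty) (hKmin : 2 ≤ K.min' hKne)
    (v n N : ℕ)
    (hex : ∃ (V : Type) (_ : Fintype V) (_ : DecidableEq V) (B : Finset (Finset V)),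
      Fintype.card V = v ∧ IsPacking B K ∧ B.card = n ∧ (∑ b ∈ B, b.card = N) ∧
      ∀ x : V, ((v : ℝ) - 1) / (τ * ((K.min' hKne : ℝ) - 1)) ≤ (repl B x : ℝ)) :
    ∃ Φ : Matrix (Fin n) (Fin N) ℂ,
      ∀ t : ℕ, 0 < t → (t : ℝ) ≤ Real.sqrt n / (4 * τ) → Recoverable Φ t := by
  rcases Nat.eq_zero_or_pos n with rfl | hn
  · exact ⟨0, fun t ht hle => absurd hle (by simpa using ht.ne')⟩
  obtain ⟨V, _, _, B, rfl, hB, rfl, rfl, hrepl⟩ := hex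
  set k := K.min' hKne
  have hk : ∀ b ∈ B, k ≤ #b := fun b hb => K.min'_le _ (hB.1 b hb)
  obtain ⟨b, hb⟩ := card_pos.1 hn
  have hv : 2 ≤ Fintype.card V := hKmin.trans ((hk b hb).trans (card_le_univ b))
  have hv' : (2 : ℝ) ≤ Fintype.card V := by exact_mod_cast hv
  have hk' : (2 : ℝ) ≤ k := by exact_mod_cast hKmin
  have hr : 0 < ((Fintype.card V : ℝ) - 1) / (τ * (k - 1)) :=
    div_pos (by linarith) (mul_pos (by linarith) (by linarith))
  obtain ⟨Φ, hΦ⟩ := exists_isUnitNormCoherent_of_isPacking hB hr hrepl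
  have hsqrt := sqrt_mul_sub_one_le (by omega) (card_mul_le_of_isPacking hB hk)
  refine ⟨Φ.submatrix (Fintype.equivFinOfCardEq (Fintype.card_coe B)).symm
    (Fintype.equivFinOfCardEq (by rw [Fintype.card_coe, card_sigma]; rfl)).symm, fun t _ hle => ?_⟩
  refine recoverable_of_isUnitNormCoherent (hΦ.submatrix _ _) (inv_nonneg.2 hr.le) ?_
  have h2t : 2 * (t : ℝ) ≤ ((Fintype.card V : ℝ) - 1) / (τ * (k - 1)) := by
    rw [le_div_iff₀ (by linarith)] at hle
    rw [le_div_iff₀ (mul_pos (by linarith) (by linarith))]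
    nlinarith
  rw [← div_eq_mul_inv, div_lt_one hr]
  linarith

/-- If `τ ≥ 1`, `2 ≤ K_min`, `K_max ≤ √2 (K_min − 1)`, and there is a `(v,K)`-packing
with `n` blocks, block sizes summing to `N`, `2n − 1 ≤ N`, and every replication
number at least `(v−1)/(τ(K_min−1))`, then there exists an `n × N` complex matrix
with `(ℓ₁,t)`-recoverability for all positive `t ≤ √n/(4τ)`. -/
theorem stmt_16 (τ : ℝ) (hτ : 1 ≤ τ)
    (K : Finset ℕ) (hKne : K.Nonempty) (hKmin : 2 ≤ K.min' hKne)
    (hKmax : (K.max' hKne : ℝ) ≤ Real.sqrt 2 * ((K.min' hKne : ℝ) - 1))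
    (v n N : ℕ) (hnN : 2 * n - 1 ≤ N)
    (hex : ∃ (V : Type) (_ : Fintype V) (_ : DecidableEq V) (B : Finset (Finset V)),
      Fintype.card V = v ∧ IsPacking B K ∧ B.card = n ∧ (∑ b ∈ B, b.card = N) ∧
      ∀ x : V, ((v : ℝ) - 1) / (τ * ((K.min' hKne : ℝ) - 1)) ≤ (repl B x : ℝ)) :
    ∃ Φ : Matrix (Fin n) (Fin N) ℂ,
      ∀ t : ℕ, 0 < t → (t : ℝ) ≤ Real.sqrt n / (4 * τ) → Recoverable Φ t :=
  stmt_16_general τ hτ K hKne hKmin v n N hex
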